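/- The sum of the reciprocals of the square roots of the first n natural numbers satisfies ∑_{i=1}^{n} 1/√i = 2√n + ζ(1/2) + o(1) as n → ∞; precisely, the sequence n ↦ ∑_{i=1}^{n} 1/√i − 2·n^{1/2} converges to ζ(1/2). -/

import Mathlib

/-!
Put `T(s, x) = (1 - s) x^{-s} - ((x + 1)^{1 - s} - x^{1 - s})` (`zetaTerm`), `1 - s` times the error
made in replacing `∫_x^{x+1} t^{-s} dt` by `x^{-s}`. A second-order Taylor estimate gives
`|T(s, x)| ≤ |s (1 - s)| x^{-Re s - 1}`, so `∑_{n ≥ 1} T(s, n)` converges locally uniformly and is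
holomorphic on `Re s > 0`; the factor `1 - s` removes the pole at `s = 1`, so no point has to be
excluded. For `Re s > 1` the series telescopes to `1 + (1 - s) ζ(s) = 1 - riemannZeta₁ s`, and the
identity theorem extends this to the half-plane. Reading the telescoped partial sums backwards
gives `∑_{n ≤ N} n^{-s} - N^{1-s}/(1 - s) → ζ(s)` for `Re s > 0`, `s ≠ 1`; at `s = 1/2` this is the
claim.
-/

open Complex Filter Finset Set Topology

theorem hasDerivAt_ofReal_cpow_const_of_pos {x : ℝ} (hx : 0 < x) (r : ℂ) :
    HasDerivAt (fun y : ℝ => (y : ℂ) ^ r) (r * (x : ℂ) ^ (r - 1)) x := by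
  simpa using ((hasDerivAt_id (x : ℂ)).cpow_const (ofReal_mem_slitPlane.2 hx)).comp_ofReal

theorem norm_sub_sub_smul_le_of_hasDerivWithinAt {E : Type*} [NormedAddCommGroup E]
    [NormedSpace ℝ E] {f f' : ℝ → E} {a b C : ℝ} (hab : a ≤ b)
    (hf : ∀ t ∈ Icc a b, HasDerivWithinAt f (f' t) (Icc a b) t)
    (hC : ∀ t ∈ Icc a b, ‖f' t - f' a‖ ≤ C) :
    ‖f b - f a - (b - a) • f' a‖ ≤ C * (b - a) := by
  have hg : ∀ t ∈ Icc a b,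
      HasDerivWithinAt (fun t => f t - t • f' a) (f' t - f' a) (Icc a b) t := fun t ht => by
    simpa using (hf t ht).fun_sub ((hasDerivWithinAt_id t _).smul_const (f' a))
  have := (convex_Icc a b).norm_image_sub_le_of_norm_hasDerivWithin_le hg hC
    (left_mem_Icc.2 hab) (right_mem_Icc.2 hab)
  rw [Real.norm_of_nonneg (sub_nonneg.2 hab)] at this
  convert this using 2
  rw [sub_smul]; abel

theorem HasSum.tendsto_sum_Icc_one {M : Type*} [AddCommMonoid M] [TopologicalSpace M]
    {f : ℕ → M} {a : M} (hf : HasSum (fun n => f (n + 1)) a) :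
    Tendsto (fun N => ∑ n ∈ Icc 1 N, f n) atTop (𝓝 a) :=
  hf.tendsto_sum_nat.congr fun N => by rw [range_eq_Ico, sum_Ico_add']; rfl

theorem tendsto_natCast_cpow_atTop_zero {z : ℂ} (hz : z.re < 0) :
    Tendsto (fun N : ℕ => (N : ℂ) ^ z) atTop (𝓝 0) := by
  rw [tendsto_zero_iff_norm_tendsto_zero]
  have hnorm : ∀ N : ℕ, ‖(N : ℂ) ^ z‖ = (N : ℝ) ^ z.re := fun N =>
    norm_natCast_cpow_of_re_ne_zero N hz.ne
  simpa [hnorm, Function.comp_def] using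
    (tendsto_rpow_neg_atTop (neg_pos.2 hz)).comp tendsto_natCast_atTop_atTop

noncomputable def zetaTerm (s : ℂ) (x : ℝ) : ℂ :=
  (1 - s) * (x : ℂ) ^ (-s) - (((x + 1 : ℝ) : ℂ) ^ (1 - s) - (x : ℂ) ^ (1 - s))

theorem norm_zetaTerm_le {s : ℂ} (hs : -1 ≤ s.re) {x : ℝ} (hx : 0 < x) :
    ‖zetaTerm s x‖ ≤ ‖s * (1 - s)‖ * x ^ (-s.re - 1) := by
  set C := ‖s * (1 - s)‖ * x ^ (-s.re - 1)
  have hpos : ∀ t ∈ Icc x (x + 1), 0 < t := fun t ht => hx.trans_le ht.1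
  have hf : ∀ t ∈ Icc x (x + 1), HasDerivWithinAt (fun t : ℝ => (t : ℂ) ^ (1 - s))
      ((1 - s) * (t : ℂ) ^ (-s)) (Icc x (x + 1)) t := fun t ht => by
    simpa using (hasDerivAt_ofReal_cpow_const_of_pos (hpos t ht) (1 - s)).hasDerivWithinAt
  have hf' : ∀ t ∈ Icc x (x + 1), HasDerivWithinAt (fun t : ℝ => (1 - s) * (t : ℂ) ^ (-s))
      ((1 - s) * (-s * (t : ℂ) ^ (-s - 1))) (Icc x (x + 1)) t := fun t ht =>
    ((hasDerivAt_ofReal_cpow_const_of_pos (hpos t ht) (-s)).const_mul (1 - s)).hasDerivWithinAt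
  have hf'' : ∀ t ∈ Icc x (x + 1), ‖(1 - s) * (-s * (t : ℂ) ^ (-s - 1))‖ ≤ C := fun t ht => by
    rw [← mul_assoc, mul_neg, neg_mul, norm_neg, mul_comm (1 - s), norm_mul,
      norm_cpow_eq_rpow_re_of_pos (hpos t ht)]
    simp only [sub_re, neg_re, one_re]
    exact mul_le_mul_of_nonneg_left
      (Real.rpow_le_rpow_of_nonpos hx ht.1 (by linarith)) (norm_nonneg _)
  have hf'_lip : ∀ t ∈ Icc x (x + 1),
      ‖(1 - s) * (t : ℂ) ^ (-s) - (1 - s) * (x : ℂ) ^ (-s)‖ ≤ C := fun t ht => by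
    calc _ ≤ C * ‖t - x‖ := (convex_Icc x (x + 1)).norm_image_sub_le_of_norm_hasDerivWithin_le
            hf' hf'' (left_mem_Icc.2 (by linarith)) ht
      _ ≤ C * 1 := by
        gcongr
        rw [Real.norm_of_nonneg (by linarith [ht.1])]
        linarith [ht.2]
      _ = C := mul_one C
  have := norm_sub_sub_smul_le_of_hasDerivWithinAt (by linarith) hf hf'_lip
  rw [add_sub_cancel_left, one_smul, mul_one, ← norm_neg] at this
  calc ‖zetaTerm s x‖ = _ := by unfold zetaTerm; ring_nf
    _ ≤ C := this

theorem summable_nat_add_one_rpow {p : ℝ} (hp : p < -1) :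
    Summable (fun n : ℕ => ((n + 1 : ℕ) : ℝ) ^ p) :=
  (summable_nat_add_iff 1).2 (Real.summable_nat_rpow.2 hp)

theorem norm_zetaTerm_le_of_le {s : ℂ} {σ R : ℝ} (hσ : -1 ≤ σ) (hσs : σ ≤ s.re) (hR : ‖s‖ ≤ R)
    {x : ℝ} (hx : 1 ≤ x) : ‖zetaTerm s x‖ ≤ R * (1 + R) * x ^ (-σ - 1) := by
  have hs : ‖s * (1 - s)‖ ≤ R * (1 + R) := by
    rw [norm_mul]
    gcongr
    · exact (norm_nonneg s).trans hR
    · exact (norm_sub_le _ _).trans (by simpa using hR)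
  calc ‖zetaTerm s x‖ ≤ ‖s * (1 - s)‖ * x ^ (-s.re - 1) :=
        norm_zetaTerm_le (hσ.trans hσs) (by linarith)
    _ ≤ R * (1 + R) * x ^ (-σ - 1) := by
        have hR0 : 0 ≤ R := (norm_nonneg s).trans hR
        gcongr

theorem summable_zetaTerm {s : ℂ} (hs : 0 < s.re) :
    Summable (fun n : ℕ => zetaTerm s (n + 1 : ℕ)) :=
  .of_norm_bounded ((summable_nat_add_one_rpow (by linarith)).mul_left _) fun n =>
    norm_zetaTerm_le_of_le (by linarith) le_rfl le_rfl (by simp)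

theorem differentiable_zetaTerm {x : ℝ} (hx : 0 < x) : Differentiable ℂ (zetaTerm · x) := by
  have h0 : (x : ℂ) ≠ 0 := by exact_mod_cast hx.ne'
  have h1 : ((x + 1 : ℝ) : ℂ) ≠ 0 := by exact_mod_cast (by linarith : x + 1 ≠ 0)
  unfold zetaTerm
  fun_prop (disch := first | exact Or.inl h0 | exact Or.inl h1)

noncomputable def zetaTermSum (s : ℂ) : ℂ := ∑' n : ℕ, zetaTerm s (n + 1 : ℕ)

theorem differentiableOn_zetaTermSum : DifferentiableOn ℂ zetaTermSum {s | 0 < s.re} := by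
  intro s₀ (hs₀ : 0 < s₀.re)
  set U := {s : ℂ | s₀.re / 2 < s.re} ∩ Metric.ball 0 (‖s₀‖ + 1)
  have hU : IsOpen U :=
    (isOpen_lt continuous_const continuous_re).inter Metric.isOpen_ball
  have hs₀U : s₀ ∈ U := ⟨show s₀.re / 2 < s₀.re by linarith, by simp⟩
  have hdiff : DifferentiableOn ℂ zetaTermSum U :=
    differentiableOn_tsum_of_summable_norm
      ((summable_nat_add_one_rpow (p := -(s₀.re / 2) - 1) (by linarith)).mul_left _)
      (fun n => (differentiable_zetaTerm (by positivity)).differentiableOn) hU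
      fun n s hs => norm_zetaTerm_le_of_le (by linarith) hs.1.le
        (by simpa using (Metric.mem_ball.1 hs.2).le) (by simp)
  exact (hdiff.differentiableAt (hU.mem_nhds hs₀U)).differentiableWithinAt

theorem sum_Icc_zetaTerm (s : ℂ) (N : ℕ) :
    ∑ n ∈ Icc 1 N, zetaTerm s n =
      (1 - s) * ∑ n ∈ Icc 1 N, (n : ℂ) ^ (-s) - (((N + 1 : ℕ) : ℂ) ^ (1 - s) - 1) := by
  induction N with
  | zero => simp
  | succ N ih =>
    rw [sum_Icc_succ_top (by omega), sum_Icc_succ_top (by omega), ih, zetaTerm]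
    push_cast
    ring

theorem hasSum_nat_add_one_cpow_neg {s : ℂ} (hs : 1 < s.re) :
    HasSum (fun n : ℕ => ((n + 1 : ℕ) : ℂ) ^ (-s)) (riemannZeta s) := by
  have hsum : Summable (fun n : ℕ => 1 / ((n + 1 : ℕ) : ℂ) ^ s) :=
    (summable_nat_add_iff 1).2 (Complex.summable_one_div_nat_cpow.2 hs)
  simpa [zeta_eq_tsum_one_div_nat_add_one_cpow hs, cpow_neg] using hsum.hasSum

theorem zetaTermSum_eq_of_one_lt_re {s : ℂ} (hs : 1 < s.re) :
    zetaTermSum s = 1 - riemannZeta₁ s := by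
  have hs1 : s ≠ 1 := fun h => by simp [h] at hs
  have hpow : Tendsto (fun N : ℕ => ((N + 1 : ℕ) : ℂ) ^ (1 - s)) atTop (𝓝 0) :=
    (tendsto_add_atTop_iff_nat (f := fun N : ℕ => (N : ℂ) ^ (1 - s)) 1).2
      (tendsto_natCast_cpow_atTop_zero (by simpa using hs))
  have hlim := (((hasSum_nat_add_one_cpow_neg hs).tendsto_sum_Icc_one
    (f := fun n : ℕ => (n : ℂ) ^ (-s))).const_mul (1 - s)).sub (hpow.sub_const 1)
  simp only [← sum_Icc_zetaTerm] at hlim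
  rw [zetaTermSum, tendsto_nhds_unique ((summable_zetaTerm (by linarith)).hasSum.tendsto_sum_Icc_one
      (f := fun n : ℕ => zetaTerm s n)) hlim, riemannZeta_eq_inv_sub_mul hs1]
  field_simp [sub_ne_zero.2 hs1]
  ring

theorem zetaTermSum_eq {s : ℂ} (hs : 0 < s.re) : zetaTermSum s = 1 - riemannZeta₁ s := by
  have hU : IsOpen {s : ℂ | 0 < s.re} := isOpen_lt continuous_const continuous_re
  have hnear2 : zetaTermSum =ᶠ[𝓝 2] fun s => 1 - riemannZeta₁ s := by
    filter_upwards [(isOpen_lt continuous_const continuous_re).mem_nhds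
      (show (1 : ℝ) < (2 : ℂ).re by norm_num)] with s hs using zetaTermSum_eq_of_one_lt_re hs
  exact (differentiableOn_zetaTermSum.analyticOnNhd hU).eqOn_of_preconnected_of_eventuallyEq
    ((differentiable_riemannZeta₁.const_sub 1).differentiableOn.analyticOnNhd hU)
    (convex_halfSpace_re_gt 0).isPreconnected (show (0 : ℝ) < (2 : ℂ).re by norm_num) hnear2 hs

theorem tendsto_sum_Icc_cpow_neg_sub {s : ℂ} (hs : 0 < s.re) (hs1 : s ≠ 1) :
    Tendsto (fun N : ℕ => ∑ n ∈ Icc 1 N, (n : ℂ) ^ (-s) - (N : ℂ) ^ (1 - s) / (1 - s))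
      atTop (𝓝 (riemannZeta s)) := by
  have h1s : 1 - s ≠ 0 := sub_ne_zero.2 hs1.symm
  have hsum : Tendsto (fun N : ℕ => ∑ n ∈ Icc 1 N, zetaTerm s n) atTop
      (𝓝 (1 - riemannZeta₁ s)) := by
    rw [← zetaTermSum_eq hs]
    exact (summable_zetaTerm hs).hasSum.tendsto_sum_Icc_one (f := fun n : ℕ => zetaTerm s n)
  have hterm : Tendsto (fun N : ℕ => zetaTerm s N) atTop (𝓝 0) :=
    (tendsto_add_atTop_iff_nat (f := fun N : ℕ => zetaTerm s N) 1).1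
      (summable_zetaTerm hs).tendsto_atTop_zero
  -- `∑ n^{-s} - N^{1-s}/(1-s) = (∑ T(s, n) - T(s, N) - 1)/(1-s) + N^{-s}`
  have hlim := ((hsum.sub hterm).sub_const 1).div_const (1 - s) |>.add
    (tendsto_natCast_cpow_atTop_zero (z := -s) (by simpa using hs))
  rw [riemannZeta_eq_inv_sub_mul hs1]
  convert hlim using 1
  · funext N
    rw [sum_Icc_zetaTerm, zetaTerm]
    field_simp
    push_cast
    ring
  · congr 1
    have : s - 1 ≠ 0 := sub_ne_zero.2 hs1
    field_simp
    ring

/-- Ramanujan's asymptotic expansion of the sum of reciprocal square roots: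
the sequence `n ↦ ∑_{i=1}^{n} 1/√i − 2·n^{1/2}` converges to `ζ(1/2)`. -/
theorem sum_inv_sqrt_asymptotic :
    Filter.Tendsto
      (fun n : ℕ =>
        (∑ i ∈ Finset.Icc 1 n, 1 / Real.sqrt (i : ℝ)) - 2 * (n : ℝ) ^ ((1 : ℝ) / 2))
      Filter.atTop (nhds (riemannZeta (1 / 2)).re) := by
  have h := tendsto_sum_Icc_cpow_neg_sub (s := 1 / 2) (by norm_num) (by norm_num)
  refine ((continuous_re.tendsto _).comp h).congr fun N => ?_
  have hsqrt : ∀ n : ℕ, (n : ℂ) ^ (-(1 / 2 : ℂ)) = ((1 / Real.sqrt n : ℝ) : ℂ) := fun n => by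
    rw [Real.sqrt_eq_rpow, one_div (_ ^ _), ← Real.rpow_neg n.cast_nonneg,
      ofReal_cpow n.cast_nonneg]
    push_cast; ring_nf
  have hpow : (N : ℂ) ^ (1 - 1 / 2 : ℂ) / (1 - 1 / 2) =
      ((2 * (N : ℝ) ^ ((1 : ℝ) / 2) : ℝ) : ℂ) := by
    rw [ofReal_mul, ofReal_cpow N.cast_nonneg]
    push_cast; ring_nf
  simp only [Function.comp_apply, hsqrt, hpow, ← ofReal_sum, ← ofReal_sub, ofReal_re]
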